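/- arXiv:1201.3474 — 4 statements merged into one kernel-verified Lean document; each statement's English description precedes it below -/
import Mathlib

section
/- The Yamasaki space is a Hilbert space: for a connected weighted graph (b,c) and a fixed base point o ∈ V, the space D̃ = {u : Q̃(u) < ∞} equipped with the inner product ⟨u,v⟩_o = Q̃(u,v) + u(o)v(o) is a complete inner product space, and for every x ∈ V the evaluation functional u ↦ u(x) is continuous with respect to the induced norm. -/
open scoped ENNReal NNReal BigOperators
open MeasureTheory Filter

/-- A weighted graph `(b,c)` over a vertex set `V`. -/
structure WeightedGraph (V : Type*) where
  b : V → V → ℝ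
  c : V → ℝ
  b_nonneg : ∀ x y, 0 ≤ b x y
  b_diag : ∀ x, b x x = 0
  b_symm : ∀ x y, b x y = b y x
  b_summable : ∀ x, Summable fun y => b x y
  c_nonneg : ∀ x, 0 ≤ c x

/-- Membership in `ℓ²(V,m)`. -/
def MemL2 {V : Type*} (m : V → ℝ) (u : V → ℝ) : Prop :=
  Summable fun x => u x ^ 2 * m x

/-- The inner product of `ℓ²(V,m)`. -/
noncomputable def l2inner {V : Type*} (m : V → ℝ) (u v : V → ℝ) : ℝ :=
  ∑' x, u x * v x * m x

namespace WeightedGraph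

variable {V : Type*} (G : WeightedGraph V)

/-- The energy functional `Q̃` with values in `[0,∞]`. -/
noncomputable def energy (u : V → ℝ) : ℝ≥0∞ :=
  (1 / 2) * ∑' p : V × V, ENNReal.ofReal (G.b p.1 p.2 * (u p.1 - u p.2) ^ 2)
    + ∑' x, ENNReal.ofReal (G.c x * u x ^ 2)

/-- The functions of finite energy (`D̃`). -/
def FiniteEnergy (u : V → ℝ) : Prop := G.energy u < ⊤

/-- The real-valued bilinear energy form (meaningful on functions of finite energy). -/
noncomputable def energyBilin (u v : V → ℝ) : ℝ :=
  (1 / 2) * ∑' p : V × V, G.b p.1 p.2 * (u p.1 - u p.2) * (v p.1 - v p.2)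
    + ∑' x, G.c x * u x * v x

/-- The generalized vertex degree. -/
noncomputable def deg (x : V) : ℝ := (∑' y, G.b x y) + G.c x

/-- The formal Laplacian `L̃` associated with `(b,c)` and the measure `m`. -/
noncomputable def formalL (m : V → ℝ) (u : V → ℝ) (x : V) : ℝ :=
  ((∑' y, G.b x y * (u x - u y)) + G.c x * u x) / m x

/-- Connectedness of the weighted graph: any two vertices are joined by a path of edges. -/
def Connected : Prop :=
  ∀ x y : V, ∃ (n : ℕ) (p : ℕ → V), p 0 = x ∧ p n = y ∧ ∀ i < n, 0 < G.b (p i) (p (i + 1))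

/-- The squared distance of the Yamasaki space with base point `o`. -/
noncomputable def ydistSq (o : V) (u v : V → ℝ) : ℝ :=
  (G.energy (fun x => u x - v x)).toReal + (u o - v o) ^ 2

/-- The domain of the regular Dirichlet form `Q^(D)`: the closure of the finitely
supported functions in `D̃ ∩ ℓ²(V,m)` with respect to the form norm. -/
def regDom (m : V → ℝ) : Set (V → ℝ) :=
  {u | G.FiniteEnergy u ∧ MemL2 m u ∧
    ∃ f : ℕ → V → ℝ, (∀ n, (Function.support (f n)).Finite) ∧
      Filter.Tendsto
        (fun n => (G.energy (fun x => u x - f n x)).toReal + ∑' x, (u x - f n x) ^ 2 * m x)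
        Filter.atTop (nhds 0)}

/-- Transience of a Dirichlet form given by its domain: existence of a strictly positive
reference function `g ∈ ℓ¹(V,m) ∩ ℓ^∞(V)` with `⟨|u|,g⟩ ≤ Q(u)^{1/2}` on the domain. -/
def FormTransient (m : V → ℝ) (dom : Set (V → ℝ)) : Prop :=
  ∃ g : V → ℝ, (∀ x, 0 < g x) ∧ (Summable fun x => g x * m x) ∧ (∃ C, ∀ x, g x ≤ C) ∧
    ∀ u ∈ dom, ∑' x, |u x| * g x * m x ≤ Real.sqrt (G.energyBilin u u)

end WeightedGraph

/-- The data of a Dirichlet form `Q` associated with a weighted graph `(b,c)` on `ℓ²(V,m)`,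
together with its semigroup `T t = e^{-tL}` and resolvent `R α = (L+α)^{-1}`, with the
standard properties: `Q` is a restriction of `Q̃` with `D(Q^(D)) ⊆ D(Q) ⊆ D(Q^(N))`,
the semigroup is symmetric, Markovian, positivity preserving, the resolvent is characterized
by the form, and the resolvent is the Laplace transform of the semigroup. -/
structure FormSetup {V : Type*} (G : WeightedGraph V) (m : V → ℝ) where
  dom : Set (V → ℝ)
  dom_fe : ∀ u ∈ dom, G.FiniteEnergy u
  dom_l2 : ∀ u ∈ dom, MemL2 m u
  reg_sub : G.regDom m ⊆ dom
  T : ℝ → (V → ℝ) → V → ℝ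
  R : ℝ → (V → ℝ) → V → ℝ
  T_linear : ∀ t, IsLinearMap ℝ (T t)
  R_linear : ∀ α, IsLinearMap ℝ (R α)
  T_semigroup : ∀ s t : ℝ, 0 < s → 0 < t → ∀ f, T (s + t) f = T s (T t f)
  T_l2 : ∀ t : ℝ, 0 < t → ∀ f, MemL2 m f → MemL2 m (T t f)
  T_symm : ∀ t : ℝ, 0 < t → ∀ f g, MemL2 m f → MemL2 m g →
    l2inner m (T t f) g = l2inner m f (T t g)
  T_contraction : ∀ t : ℝ, 0 < t → ∀ f, MemL2 m f →
    ∑' x, T t f x ^ 2 * m x ≤ ∑' x, f x ^ 2 * m x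
  T_pos : ∀ t : ℝ, 0 < t → ∀ f, (∀ x, 0 ≤ f x) → ∀ x, 0 ≤ T t f x
  T_markov : ∀ t : ℝ, 0 < t → ∀ f, (∀ x, 0 ≤ f x ∧ f x ≤ 1) →
    ∀ x, 0 ≤ T t f x ∧ T t f x ≤ 1
  T_cont : ∀ f, MemL2 m f → ∀ x, ContinuousOn (fun t => T t f x) (Set.Ioi (0 : ℝ))
  R_mem : ∀ α : ℝ, 0 < α → ∀ f, MemL2 m f → R α f ∈ dom
  R_pos : ∀ α : ℝ, 0 < α → ∀ f, (∀ x, 0 ≤ f x) → ∀ x, 0 ≤ R α f x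
  R_char : ∀ α : ℝ, 0 < α → ∀ f, MemL2 m f → ∀ v ∈ dom,
    G.energyBilin (R α f) v + α * l2inner m (R α f) v = l2inner m f v
  R_laplace : ∀ α : ℝ, 0 < α → ∀ f, MemL2 m f → (∀ x, 0 ≤ f x) → ∀ y,
    ENNReal.ofReal (R α f y) =
      ∫⁻ t in Set.Ioi (0 : ℝ), ENNReal.ofReal (Real.exp (-α * t) * T t f y)

namespace FormSetup

variable {V : Type*} {G : WeightedGraph V} {m : V → ℝ}

open scoped Classical in
/-- The Green function `G(x,y) = ∫₀^∞ (e^{-tL} δ_x)(y) dt`, with values in `[0,∞]`. -/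
noncomputable def green (S : FormSetup G m) (x y : V) : ℝ≥0∞ :=
  ∫⁻ t in Set.Ioi (0 : ℝ), ENNReal.ofReal (S.T t (fun z => if z = x then 1 else 0) y)

/-- The extended Dirichlet space `D(Q)_e`: functions which are pointwise limits of
`Q`-Cauchy sequences from `D(Q)`. -/
def extDom (S : FormSetup G m) : Set (V → ℝ) :=
  {u | ∃ f : ℕ → V → ℝ, (∀ n, f n ∈ S.dom) ∧
    (∀ ε > (0 : ℝ), ∃ N, ∀ p ≥ N, ∀ q ≥ N,
      G.energyBilin (fun x => f p x - f q x) (fun x => f p x - f q x) < ε) ∧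
    ∀ x, Filter.Tendsto (fun n => f n x) Filter.atTop (nhds (u x))}

/-- Stochastic completeness: the resolvent `(L+1)^{-1}`, extended to `ℓ^∞(V)` by monotone
limits, maps the constant function `1` to `1`. -/
def StochComplete (S : FormSetup G m) : Prop :=
  ∀ f : ℕ → V → ℝ, (∀ n, MemL2 m (f n)) →
    (∀ n x, 0 ≤ f n x ∧ f n x ≤ f (n + 1) x ∧ f n x ≤ 1) →
    (∀ x, Filter.Tendsto (fun n => f n x) Filter.atTop (nhds 1)) →
    ∀ x, Filter.Tendsto (fun n => S.R 1 (f n) x) Filter.atTop (nhds 1)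

end FormSetup


section YamasakiAux

open Filter

lemma my_tsum_liminf_le {ι : Type*} (g : ℕ → ι → ℝ≥0∞) :
    ∑' i, liminf (fun n => g n i) atTop ≤ liminf (fun n => ∑' i, g n i) atTop := by
  let _ : MeasurableSpace ι := ⊤
  have hsc : MeasurableSingletonClass ι := ⟨fun _ => trivial⟩
  calc ∑' i, liminf (fun n => g n i) atTop
      = ∫⁻ i, liminf (fun n => g n i) atTop ∂Measure.count := (lintegral_count _).symm
    _ ≤ liminf (fun n => ∫⁻ i, g n i ∂Measure.count) atTop :=
        lintegral_liminf_le fun _ => measurable_from_top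
    _ = liminf (fun n => ∑' i, g n i) atTop := by simp only [lintegral_count]

lemma my_tsum_ofReal_liminf {ι : Type*} (h : ℕ → ι → ℝ) (h' : ι → ℝ)
    (hc : ∀ i, Tendsto (fun n => h n i) atTop (nhds (h' i))) :
    ∑' i, ENNReal.ofReal (h' i) ≤ liminf (fun n => ∑' i, ENNReal.ofReal (h n i)) atTop := by
  have heq : ∀ i, ENNReal.ofReal (h' i)
      = liminf (fun n => ENNReal.ofReal (h n i)) atTop := fun i =>
    ((ENNReal.continuous_ofReal.tendsto _).comp (hc i)).liminf_eq.symm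
  rw [tsum_congr heq]
  exact my_tsum_liminf_le _

namespace WeightedGraph

variable {V : Type*} (G : WeightedGraph V)

/-- The first part of the energy. -/
noncomputable def partA (u : V → ℝ) : ℝ≥0∞ :=
  ∑' p : V × V, ENNReal.ofReal (G.b p.1 p.2 * (u p.1 - u p.2) ^ 2)

/-- The second part of the energy. -/
noncomputable def partB (u : V → ℝ) : ℝ≥0∞ :=
  ∑' x, ENNReal.ofReal (G.c x * u x ^ 2)

lemma energy_eq (u : V → ℝ) : G.energy u = (1 / 2) * G.partA u + G.partB u := rfl

lemma half_partA_le (u : V → ℝ) : (1 / 2 : ℝ≥0∞) * G.partA u ≤ G.energy u :=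
  le_self_add

lemma partA_le (u : V → ℝ) : G.partA u ≤ 2 * G.energy u := by
  have h : (2 : ℝ≥0∞) * ((1 / 2) * G.partA u) ≤ 2 * G.energy u :=
    mul_le_mul_right (G.half_partA_le u) 2
  rwa [← mul_assoc, show (2 : ℝ≥0∞) * (1 / 2) = 1 by rw [one_div, ENNReal.mul_inv_cancel (by norm_num) (by norm_num)], one_mul] at h

lemma partB_le (u : V → ℝ) : G.partB u ≤ G.energy u := le_add_self

lemma term_le (u : V → ℝ) (x y : V) :
    ENNReal.ofReal (G.b x y * (u x - u y) ^ 2) ≤ 2 * G.energy u :=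
  le_trans (ENNReal.le_tsum ((x, y) : V × V)) (G.partA_le u)

lemma term_le_real (u : V → ℝ) (hu : G.FiniteEnergy u) (x y : V) :
    G.b x y * (u x - u y) ^ 2 ≤ 2 * (G.energy u).toReal := by
  have h := G.term_le u x y
  have hne : 2 * G.energy u ≠ ⊤ := by
    exact ENNReal.mul_ne_top (by norm_num) hu.ne
  have h2 := ENNReal.toReal_mono hne h
  rwa [ENNReal.toReal_ofReal (mul_nonneg (G.b_nonneg x y) (sq_nonneg _)),
    ENNReal.toReal_mul, ENNReal.toReal_ofNat] at h2

lemma partA_sub_le (a c : V → ℝ) :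
    G.partA (fun x => a x - c x) ≤ 2 * G.partA a + 2 * G.partA c := by
  have hpt : ∀ p : V × V,
      ENNReal.ofReal (G.b p.1 p.2 * ((a p.1 - c p.1) - (a p.2 - c p.2)) ^ 2)
        ≤ 2 * ENNReal.ofReal (G.b p.1 p.2 * (a p.1 - a p.2) ^ 2)
          + 2 * ENNReal.ofReal (G.b p.1 p.2 * (c p.1 - c p.2) ^ 2) := by
    intro p
    have hb := G.b_nonneg p.1 p.2
    have hkey : G.b p.1 p.2 * ((a p.1 - c p.1) - (a p.2 - c p.2)) ^ 2
        ≤ 2 * (G.b p.1 p.2 * (a p.1 - a p.2) ^ 2)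
          + 2 * (G.b p.1 p.2 * (c p.1 - c p.2) ^ 2) := by
      nlinarith [mul_nonneg hb (sq_nonneg ((a p.1 - a p.2) + (c p.1 - c p.2)))]
    calc ENNReal.ofReal (G.b p.1 p.2 * ((a p.1 - c p.1) - (a p.2 - c p.2)) ^ 2)
        ≤ ENNReal.ofReal (2 * (G.b p.1 p.2 * (a p.1 - a p.2) ^ 2)
            + 2 * (G.b p.1 p.2 * (c p.1 - c p.2) ^ 2)) := ENNReal.ofReal_le_ofReal hkey
      _ = 2 * ENNReal.ofReal (G.b p.1 p.2 * (a p.1 - a p.2) ^ 2)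
            + 2 * ENNReal.ofReal (G.b p.1 p.2 * (c p.1 - c p.2) ^ 2) := by
          rw [ENNReal.ofReal_add (by positivity) (by positivity),
            ENNReal.ofReal_mul (by norm_num : (0:ℝ) ≤ 2),
            ENNReal.ofReal_mul (by norm_num : (0:ℝ) ≤ 2), ENNReal.ofReal_ofNat]
  calc G.partA (fun x => a x - c x)
      ≤ ∑' p : V × V, (2 * ENNReal.ofReal (G.b p.1 p.2 * (a p.1 - a p.2) ^ 2)
          + 2 * ENNReal.ofReal (G.b p.1 p.2 * (c p.1 - c p.2) ^ 2)) :=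
        ENNReal.tsum_le_tsum hpt
    _ = 2 * G.partA a + 2 * G.partA c := by
        rw [ENNReal.tsum_add, ENNReal.tsum_mul_left, ENNReal.tsum_mul_left]; rfl

lemma partB_sub_le (a c : V → ℝ) :
    G.partB (fun x => a x - c x) ≤ 2 * G.partB a + 2 * G.partB c := by
  have hpt : ∀ x : V,
      ENNReal.ofReal (G.c x * (a x - c x) ^ 2)
        ≤ 2 * ENNReal.ofReal (G.c x * a x ^ 2) + 2 * ENNReal.ofReal (G.c x * c x ^ 2) := by
    intro x
    have hcx := G.c_nonneg x
    have hkey : G.c x * (a x - c x) ^ 2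
        ≤ 2 * (G.c x * a x ^ 2) + 2 * (G.c x * c x ^ 2) := by
      nlinarith [mul_nonneg hcx (sq_nonneg (a x + c x))]
    calc ENNReal.ofReal (G.c x * (a x - c x) ^ 2)
        ≤ ENNReal.ofReal (2 * (G.c x * a x ^ 2) + 2 * (G.c x * c x ^ 2)) :=
          ENNReal.ofReal_le_ofReal hkey
      _ = 2 * ENNReal.ofReal (G.c x * a x ^ 2) + 2 * ENNReal.ofReal (G.c x * c x ^ 2) := by
          rw [ENNReal.ofReal_add (by positivity) (by positivity),
            ENNReal.ofReal_mul (by norm_num : (0:ℝ) ≤ 2),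
            ENNReal.ofReal_mul (by norm_num : (0:ℝ) ≤ 2), ENNReal.ofReal_ofNat]
  calc G.partB (fun x => a x - c x)
      ≤ ∑' x : V, (2 * ENNReal.ofReal (G.c x * a x ^ 2)
          + 2 * ENNReal.ofReal (G.c x * c x ^ 2)) := ENNReal.tsum_le_tsum hpt
    _ = 2 * G.partB a + 2 * G.partB c := by
        rw [ENNReal.tsum_add, ENNReal.tsum_mul_left, ENNReal.tsum_mul_left]; rfl

lemma finiteEnergy_sub {a c : V → ℝ} (ha : G.FiniteEnergy a) (hc : G.FiniteEnergy c) :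
    G.FiniteEnergy (fun x => a x - c x) := by
  have hAa : G.partA a < ⊤ := lt_of_le_of_lt (G.partA_le a)
    (ENNReal.mul_lt_top (by norm_num) ha)
  have hAc : G.partA c < ⊤ := lt_of_le_of_lt (G.partA_le c)
    (ENNReal.mul_lt_top (by norm_num) hc)
  have hBa : G.partB a < ⊤ := lt_of_le_of_lt (G.partB_le a) ha
  have hBc : G.partB c < ⊤ := lt_of_le_of_lt (G.partB_le c) hc
  have h1 : G.partA (fun x => a x - c x) < ⊤ :=
    lt_of_le_of_lt (G.partA_sub_le a c)
      (ENNReal.add_lt_top.2 ⟨ENNReal.mul_lt_top (by norm_num) hAa,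
        ENNReal.mul_lt_top (by norm_num) hAc⟩)
  have h2 : G.partB (fun x => a x - c x) < ⊤ :=
    lt_of_le_of_lt (G.partB_sub_le a c)
      (ENNReal.add_lt_top.2 ⟨ENNReal.mul_lt_top (by norm_num) hBa,
        ENNReal.mul_lt_top (by norm_num) hBc⟩)
  rw [FiniteEnergy, energy_eq]
  exact ENNReal.add_lt_top.2 ⟨ENNReal.mul_lt_top (by norm_num) h1, h2⟩

lemma ydistSq_zero (o : V) (u : V → ℝ) :
    G.ydistSq o u 0 = (G.energy u).toReal + u o ^ 2 := by
  simp [ydistSq]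

lemma ydistSq_nonneg (o : V) (u v : V → ℝ) : 0 ≤ G.ydistSq o u v :=
  add_nonneg ENNReal.toReal_nonneg (sq_nonneg _)

lemma eval_bound (hconn : G.Connected) (o x : V) :
    ∃ C > (0 : ℝ), ∀ u : V → ℝ, G.FiniteEnergy u →
      |u x| ≤ C * Real.sqrt ((G.energy u).toReal + u o ^ 2) := by
  obtain ⟨n, p, hp0, hpn, hpos⟩ := hconn o x
  refine ⟨1 + ∑ i ∈ Finset.range n, Real.sqrt (2 / G.b (p i) (p (i + 1))), by positivity, ?_⟩
  intro u hu
  set E := (G.energy u).toReal + u o ^ 2 with hE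
  have hE0 : 0 ≤ E := add_nonneg ENNReal.toReal_nonneg (sq_nonneg _)
  have hEt : (G.energy u).toReal ≤ E := le_add_of_nonneg_right (sq_nonneg _)
  have hstep : ∀ i ∈ Finset.range n,
      |u (p (i + 1)) - u (p i)| ≤ Real.sqrt (2 / G.b (p i) (p (i + 1))) * Real.sqrt E := by
    intro i hi
    have hb := hpos i (Finset.mem_range.1 hi)
    have hterm := G.term_le_real u hu (p i) (p (i + 1))
    have h2 : (u (p (i + 1)) - u (p i)) ^ 2 ≤ 2 / G.b (p i) (p (i + 1)) * E := by
      rw [div_mul_eq_mul_div, le_div_iff₀ hb]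
      nlinarith [hterm, hEt]
    calc |u (p (i + 1)) - u (p i)|
        = Real.sqrt ((u (p (i + 1)) - u (p i)) ^ 2) := (Real.sqrt_sq_eq_abs _).symm
      _ ≤ Real.sqrt (2 / G.b (p i) (p (i + 1)) * E) := Real.sqrt_le_sqrt h2
      _ = Real.sqrt (2 / G.b (p i) (p (i + 1))) * Real.sqrt E := Real.sqrt_mul (by positivity) _
  have htel : u x - u o = ∑ i ∈ Finset.range n, (u (p (i + 1)) - u (p i)) := by
    rw [Finset.sum_range_sub (fun i => u (p i)), hp0, hpn]
  have habs : |u x - u o| ≤ (∑ i ∈ Finset.range n,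
      Real.sqrt (2 / G.b (p i) (p (i + 1)))) * Real.sqrt E := by
    rw [htel, Finset.sum_mul]
    exact le_trans (Finset.abs_sum_le_sum_abs _ _) (Finset.sum_le_sum hstep)
  have huo : |u o| ≤ Real.sqrt E := by
    rw [← Real.sqrt_sq_eq_abs]
    exact Real.sqrt_le_sqrt (le_add_of_nonneg_left ENNReal.toReal_nonneg)
  calc |u x| = |u o + (u x - u o)| := by ring_nf
    _ ≤ |u o| + |u x - u o| := abs_add_le _ _
    _ ≤ Real.sqrt E + (∑ i ∈ Finset.range n,
        Real.sqrt (2 / G.b (p i) (p (i + 1)))) * Real.sqrt E := add_le_add huo habs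
    _ = (1 + ∑ i ∈ Finset.range n, Real.sqrt (2 / G.b (p i) (p (i + 1)))) * Real.sqrt E := by
        ring

end WeightedGraph

end YamasakiAux

/-- the Yamasaki space `(D̃, ⟨u,v⟩_o = Q̃(u,v) + u(o)v(o))` of a connected
graph is a complete inner product space (nondegenerate and complete), and every
evaluation functional is continuous. -/
theorem yamasaki_hilbert {V : Type*} [Countable V] (G : WeightedGraph V)
    (hconn : G.Connected) (o : V) :
    (∀ x : V, ∃ C > (0 : ℝ), ∀ u : V → ℝ, G.FiniteEnergy u →
      |u x| ≤ C * Real.sqrt (G.ydistSq o u 0)) ∧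
    (∀ u : V → ℝ, G.FiniteEnergy u → G.ydistSq o u 0 = 0 → u = 0) ∧
    (∀ f : ℕ → V → ℝ, (∀ n, G.FiniteEnergy (f n)) →
      (∀ ε > (0 : ℝ), ∃ N, ∀ p ≥ N, ∀ q ≥ N, G.ydistSq o (f p) (f q) < ε) →
      ∃ u : V → ℝ, G.FiniteEnergy u ∧
        Filter.Tendsto (fun n => G.ydistSq o (f n) u) Filter.atTop (nhds 0)) := by
    classical
  have heval := fun x => G.eval_bound hconn o x
  have part1 : ∀ x : V, ∃ C > (0 : ℝ), ∀ u : V → ℝ, G.FiniteEnergy u →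
      |u x| ≤ C * Real.sqrt (G.ydistSq o u 0) := by
    intro x
    obtain ⟨C, hC, hCb⟩ := heval x
    exact ⟨C, hC, fun u hu => by rw [G.ydistSq_zero]; exact hCb u hu⟩
  refine ⟨part1, ?_, ?_⟩
  · intro u hu h0
    funext x
    obtain ⟨C, hC, hCb⟩ := part1 x
    have := hCb u hu
    rw [h0, Real.sqrt_zero, mul_zero] at this
    have := abs_nonneg (u x)
    simp only [Pi.zero_apply]
    have hx : |u x| = 0 := le_antisymm (by linarith [hCb u hu, h0 ▸ (rfl : (0:ℝ) = 0)]) (abs_nonneg _)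
    exact abs_eq_zero.1 hx
  · intro f hfe hcau
    -- pointwise convergence
    have hlim : ∀ x : V, ∃ L : ℝ, Filter.Tendsto (fun n => f n x) Filter.atTop (nhds L) := by
      intro x
      obtain ⟨C, hC, hCb⟩ := part1 x
      apply cauchySeq_tendsto_of_complete
      rw [Metric.cauchySeq_iff]
      intro ε hε
      obtain ⟨N, hN⟩ := hcau ((ε / C) ^ 2) (by positivity)
      refine ⟨N, fun a ha b hb => ?_⟩
      have hfd : G.FiniteEnergy (fun y => f a y - f b y) := G.finiteEnergy_sub (hfe a) (hfe b)
      have hb1 := hCb _ hfd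
      have hdd : G.ydistSq o (fun y => f a y - f b y) 0 = G.ydistSq o (f a) (f b) := by
        simp [WeightedGraph.ydistSq]
      rw [hdd] at hb1
      have hlt : G.ydistSq o (f a) (f b) < (ε / C) ^ 2 := hN a ha b hb
      have hsq : Real.sqrt (G.ydistSq o (f a) (f b)) < ε / C := by
        have := Real.sqrt_lt_sqrt (G.ydistSq_nonneg o (f a) (f b)) hlt
        rwa [Real.sqrt_sq (by positivity)] at this
      have : |f a x - f b x| < ε := by
        calc |f a x - f b x| ≤ C * Real.sqrt (G.ydistSq o (f a) (f b)) := hb1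
          _ < C * (ε / C) := by exact mul_lt_mul_of_pos_left hsq hC
          _ = ε := by field_simp
      rwa [Real.dist_eq]
    choose u hu using hlim
    -- key estimate
    have key : ∀ ε > (0 : ℝ), ∃ N, ∀ n ≥ N,
        G.energy (fun x => f n x - u x) ≤ ENNReal.ofReal (2 * ε) ∧ (f n o - u o) ^ 2 ≤ ε := by
      intro ε hε
      obtain ⟨N, hN⟩ := hcau ε hε
      refine ⟨N, fun n hn => ?_⟩
      have henm : ∀ m ≥ N, G.energy (fun x => f n x - f m x) ≤ ENNReal.ofReal ε := by
        intro m hm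
        have hfd : G.FiniteEnergy (fun y => f n y - f m y) := G.finiteEnergy_sub (hfe n) (hfe m)
        have htr : (G.energy (fun y => f n y - f m y)).toReal ≤ ε := by
          have h1 : (G.energy (fun y => f n y - f m y)).toReal ≤ G.ydistSq o (f n) (f m) :=
            le_add_of_nonneg_right (sq_nonneg _)
          exact le_of_lt (lt_of_le_of_lt h1 (hN n hn m hm))
        rw [ENNReal.le_ofReal_iff_toReal_le hfd.ne hε.le]
        exact htr
      constructor
      · -- Fatou on both parts
        have hA : G.partA (fun x => f n x - u x)
            ≤ Filter.liminf (fun m => G.partA (fun x => f n x - f m x)) Filter.atTop := by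
          apply my_tsum_ofReal_liminf
            (fun m (q : V × V) => G.b q.1 q.2 * ((f n q.1 - f m q.1) - (f n q.2 - f m q.2)) ^ 2)
            (fun q : V × V => G.b q.1 q.2 * ((f n q.1 - u q.1) - (f n q.2 - u q.2)) ^ 2)
          intro q
          exact Filter.Tendsto.const_mul _
            (((tendsto_const_nhds.sub (hu q.1)).sub (tendsto_const_nhds.sub (hu q.2))).pow 2)
        have hB : G.partB (fun x => f n x - u x)
            ≤ Filter.liminf (fun m => G.partB (fun x => f n x - f m x)) Filter.atTop := by
          apply my_tsum_ofReal_liminf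
            (fun m (x : V) => G.c x * (f n x - f m x) ^ 2)
            (fun x : V => G.c x * (f n x - u x) ^ 2)
          intro x
          exact Filter.Tendsto.const_mul _ ((tendsto_const_nhds.sub (hu x)).pow 2)
        have hAbd : Filter.liminf (fun m => G.partA (fun x => f n x - f m x)) Filter.atTop
            ≤ 2 * ENNReal.ofReal ε := by
          have hev : ∀ᶠ m in Filter.atTop,
              G.partA (fun x => f n x - f m x) ≤ 2 * ENNReal.ofReal ε :=
            Filter.eventually_atTop.2 ⟨N, fun m hm =>
              le_trans (G.partA_le _) (mul_le_mul_right (henm m hm) 2)⟩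
          calc Filter.liminf (fun m => G.partA (fun x => f n x - f m x)) Filter.atTop
              ≤ Filter.liminf (fun _ : ℕ => 2 * ENNReal.ofReal ε) Filter.atTop :=
                Filter.liminf_le_liminf hev
            _ = 2 * ENNReal.ofReal ε := Filter.liminf_const _
        have hBbd : Filter.liminf (fun m => G.partB (fun x => f n x - f m x)) Filter.atTop
            ≤ ENNReal.ofReal ε := by
          have hev : ∀ᶠ m in Filter.atTop,
              G.partB (fun x => f n x - f m x) ≤ ENNReal.ofReal ε :=
            Filter.eventually_atTop.2 ⟨N, fun m hm => le_trans (G.partB_le _) (henm m hm)⟩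
          calc Filter.liminf (fun m => G.partB (fun x => f n x - f m x)) Filter.atTop
              ≤ Filter.liminf (fun _ : ℕ => ENNReal.ofReal ε) Filter.atTop :=
                Filter.liminf_le_liminf hev
            _ = ENNReal.ofReal ε := Filter.liminf_const _
        calc G.energy (fun x => f n x - u x)
            = (1 / 2) * G.partA (fun x => f n x - u x) + G.partB (fun x => f n x - u x) := rfl
          _ ≤ (1 / 2) * (2 * ENNReal.ofReal ε) + ENNReal.ofReal ε :=
              add_le_add (mul_le_mul_right (le_trans hA hAbd) _) (le_trans hB hBbd)
          _ = ENNReal.ofReal ε + ENNReal.ofReal ε := by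
              rw [← mul_assoc, show (1 / 2 : ℝ≥0∞) * 2 = 1 by rw [one_div, ENNReal.inv_mul_cancel (by norm_num) (by norm_num)], one_mul]
          _ = ENNReal.ofReal (2 * ε) := by
              rw [← ENNReal.ofReal_add hε.le hε.le]; ring_nf
      · -- o-value bound
        have hto : Filter.Tendsto (fun m => (f n o - f m o) ^ 2) Filter.atTop
            (nhds ((f n o - u o) ^ 2)) :=
          (tendsto_const_nhds.sub (hu o)).pow 2
        refine le_of_tendsto hto (Filter.eventually_atTop.2 ⟨N, fun m hm => ?_⟩)
        have h1 : (f n o - f m o) ^ 2 ≤ G.ydistSq o (f n) (f m) :=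
          le_add_of_nonneg_left ENNReal.toReal_nonneg
        exact le_of_lt (lt_of_le_of_lt h1 (hN n hn m hm))
    -- finite energy of u
    obtain ⟨N₁, hN₁⟩ := key 1 one_pos
    have hfin : G.FiniteEnergy (fun x => f N₁ x - u x) :=
      lt_of_le_of_lt (hN₁ N₁ le_rfl).1 ENNReal.ofReal_lt_top
    have huFE : G.FiniteEnergy u := by
      have h := G.finiteEnergy_sub (hfe N₁) hfin
      have heq : (fun x => f N₁ x - (f N₁ x - u x)) = u := funext fun x => by ring
      rwa [heq] at h
    refine ⟨u, huFE, ?_⟩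
    rw [Metric.tendsto_atTop]
    intro ε hε
    obtain ⟨N, hN⟩ := key (ε / 4) (by positivity)
    refine ⟨N, fun n hn => ?_⟩
    obtain ⟨h1, h2⟩ := hN n hn
    have ht : (G.energy (fun x => f n x - u x)).toReal ≤ 2 * (ε / 4) :=
      ENNReal.toReal_le_of_le_ofReal (by positivity) h1
    have hyd : G.ydistSq o (f n) u
        = (G.energy (fun x => f n x - u x)).toReal + (f n o - u o) ^ 2 := rfl
    rw [Real.dist_eq, sub_zero, abs_of_nonneg (G.ydistSq_nonneg o (f n) u), hyd]
    linarith
end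

section
/- Truncation convergence: for u ∈ D̃ and N ∈ ℕ, the truncation u_N = ((-N) ∨ u) ∧ N belongs to D̃ and ‖u_N - u‖_o → 0 as N → ∞. -/
open scoped ENNReal NNReal BigOperators
open MeasureTheory Filter

/-! Both the clamping `s ↦ ((-N) ∨ s) ∧ N` and its defect `s ↦ (((-N) ∨ s) ∧ N) - s` are normal
contractions (1-Lipschitz and fixing `0`), so neither increases any edge or vertex term of
`Q̃`. This gives `u_N ∈ D̃`, and it makes the terms of `Q̃(u)` a summable majorant for the terms
of `Q̃(u_N - u)`; since `u_N - u` vanishes at every vertex once `N ≥ |u x|`, dominated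
convergence gives `Q̃(u_N - u) → 0`, and the point term `(u_N - u)(o)²` is eventually `0`. -/

open scoped Topology

theorem ENNReal.tendsto_tsum_of_dominated_convergence {ι κ : Type*} {l : Filter ι}
    [l.IsCountablyGenerated] {F : ι → κ → ℝ≥0∞} {f bound : κ → ℝ≥0∞}
    (h_fin : ∑' k, bound k ≠ ⊤) (h_bound : ∀ᶠ i in l, ∀ k, F i k ≤ bound k)
    (h_lim : ∀ k, Tendsto (F · k) l (𝓝 (f k))) :
    Tendsto (fun i => ∑' k, F i k) l (𝓝 (∑' k, f k)) := by
  let _ : MeasurableSpace κ := ⊤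
  have _ : DiscreteMeasurableSpace κ := ⟨fun _ => trivial⟩
  simp_rw [← lintegral_count] at h_fin ⊢
  exact tendsto_lintegral_filter_of_dominated_convergence bound
    (Eventually.of_forall fun _ => .of_discrete) (h_bound.mono fun _ h => ae_of_all _ h) h_fin
    (ae_of_all _ h_lim)

theorem ENNReal.ofReal_mul_sq_le_ofReal_mul_sq {w a b : ℝ} (hw : 0 ≤ w) (h : |a| ≤ |b|) :
    ENNReal.ofReal (w * a ^ 2) ≤ ENNReal.ofReal (w * b ^ 2) :=
  ENNReal.ofReal_le_ofReal (mul_le_mul_of_nonneg_left (sq_le_sq.mpr h) hw)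

theorem LipschitzWith.abs_sub_le {φ : ℝ → ℝ} (hφ : LipschitzWith 1 φ) (s t : ℝ) :
    |φ s - φ t| ≤ |s - t| := by
  simpa [Real.dist_eq] using hφ.dist_le_mul s t

theorem LipschitzWith.sub_id_of_monotone {φ : ℝ → ℝ} (hφ : LipschitzWith 1 φ)
    (hmono : Monotone φ) : LipschitzWith 1 fun s => φ s - s := by
  refine LipschitzWith.of_le_add fun s t => ?_
  rw [Real.dist_eq]
  rcases le_total s t with hst | hts
  · linarith [hmono hst, neg_abs_le (s - t)]
  · linarith [le_abs_self (φ s - φ t), hφ.abs_sub_le s t, abs_of_nonneg (sub_nonneg.mpr hts)]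

theorem lipschitzWith_min_max (N : ℝ) : LipschitzWith 1 fun s : ℝ => min (max (-N) s) N :=
  (LipschitzWith.id.const_max (-N)).min_const N

theorem monotone_min_max (N : ℝ) : Monotone fun s : ℝ => min (max (-N) s) N :=
  fun _ _ h => min_le_min_right N (max_le_max_left (-N) h)

theorem tendsto_min_max_natCast_sub_self (s : ℝ) :
    Tendsto (fun N : ℕ => min (max (-(N : ℝ)) s) N - s) atTop (𝓝 0) := by
  refine tendsto_const_nhds.congr' ?_
  filter_upwards [tendsto_natCast_atTop_atTop.eventually_ge_atTop |s|] with N hN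
  obtain ⟨hlow, hup⟩ := abs_le.mp hN
  rw [max_eq_right hlow, min_eq_left hup, sub_self]

namespace WeightedGraph

variable {V : Type*} {G : WeightedGraph V}

theorem FiniteEnergy.tsum_edge_ne_top {u : V → ℝ} (hu : G.FiniteEnergy u) :
    ∑' p : V × V, ENNReal.ofReal (G.b p.1 p.2 * (u p.1 - u p.2) ^ 2) ≠ ⊤ :=
  (ENNReal.lt_top_of_mul_ne_top_right (ENNReal.add_lt_top.mp hu).1.ne (by norm_num)).ne

theorem FiniteEnergy.tsum_killing_ne_top {u : V → ℝ} (hu : G.FiniteEnergy u) :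
    ∑' x, ENNReal.ofReal (G.c x * u x ^ 2) ≠ ⊤ :=
  (ENNReal.add_lt_top.mp hu).2.ne

variable (G)

theorem energy_comp_le {φ : ℝ → ℝ} (hφ : LipschitzWith 1 φ) (hφ0 : φ 0 = 0) (u : V → ℝ) :
    G.energy (φ ∘ u) ≤ G.energy u := by
  refine add_le_add (mul_le_mul_right (ENNReal.tsum_le_tsum fun p => ?_) _)
    (ENNReal.tsum_le_tsum fun x => ?_)
  · exact ENNReal.ofReal_mul_sq_le_ofReal_mul_sq (G.b_nonneg _ _) (hφ.abs_sub_le _ _)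
  · exact ENNReal.ofReal_mul_sq_le_ofReal_mul_sq (G.c_nonneg _)
      (by simpa [hφ0] using hφ.abs_sub_le (u x) 0)

theorem tendsto_energy_comp_zero {ι : Type*} {l : Filter ι} [l.IsCountablyGenerated]
    {φ : ι → ℝ → ℝ} (hφ : ∀ i, LipschitzWith 1 (φ i)) (hφ0 : ∀ i, φ i 0 = 0)
    (hlim : ∀ s, Tendsto (fun i => φ i s) l (𝓝 0)) {u : V → ℝ} (hu : G.FiniteEnergy u) :
    Tendsto (fun i => G.energy (φ i ∘ u)) l (𝓝 0) := by
  simp only [energy, Function.comp_apply]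
  have h_edge : Tendsto (fun i => ∑' p : V × V,
      ENNReal.ofReal (G.b p.1 p.2 * (φ i (u p.1) - φ i (u p.2)) ^ 2)) l (𝓝 0) := by
    simpa using ENNReal.tendsto_tsum_of_dominated_convergence hu.tsum_edge_ne_top
      (Eventually.of_forall fun i p => ENNReal.ofReal_mul_sq_le_ofReal_mul_sq
        (G.b_nonneg _ _) ((hφ i).abs_sub_le _ _))
      fun p => ENNReal.tendsto_ofReal ((((hlim _).sub (hlim _)).pow 2).const_mul _)
  have h_killing : Tendsto (fun i => ∑' x,
      ENNReal.ofReal (G.c x * φ i (u x) ^ 2)) l (𝓝 0) := by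
    simpa using ENNReal.tendsto_tsum_of_dominated_convergence hu.tsum_killing_ne_top
      (Eventually.of_forall fun i x => ENNReal.ofReal_mul_sq_le_ofReal_mul_sq
        (G.c_nonneg _) (by simpa [hφ0] using (hφ i).abs_sub_le (u x) 0))
      fun x => ENNReal.tendsto_ofReal (((hlim _).pow 2).const_mul _)
  simpa using (ENNReal.Tendsto.const_mul h_edge (by simp)).add h_killing

end WeightedGraph

theorem truncation_converges_general {V : Type*} (G : WeightedGraph V)
    (o : V) (u : V → ℝ) (hu : G.FiniteEnergy u) :
    (∀ N : ℕ, G.FiniteEnergy (fun x => min (max (-(N : ℝ)) (u x)) N)) ∧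
      Filter.Tendsto (fun N : ℕ => G.ydistSq o (fun x => min (max (-(N : ℝ)) (u x)) N) u)
        Filter.atTop (nhds 0) := by
  refine ⟨fun N => (G.energy_comp_le (lipschitzWith_min_max N) (by simp) u).trans_lt hu, ?_⟩
  have h_energy : Tendsto (fun N : ℕ => G.energy fun x => min (max (-(N : ℝ)) (u x)) N - u x)
      atTop (𝓝 0) :=
    G.tendsto_energy_comp_zero (φ := fun (N : ℕ) s => min (max (-(N : ℝ)) s) N - s)
      (fun N => (lipschitzWith_min_max N).sub_id_of_monotone (monotone_min_max N))
      (fun N => by simp) tendsto_min_max_natCast_sub_self hu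
  simp only [WeightedGraph.ydistSq]
  simpa using ((ENNReal.tendsto_toReal ENNReal.zero_ne_top).comp h_energy).add
    ((tendsto_min_max_natCast_sub_self (u o)).pow 2)

/-- truncations `u_N = ((-N) ∨ u) ∧ N` have finite energy and converge to
`u` in the Yamasaki space. -/
theorem truncation_converges {V : Type*} [Countable V] (G : WeightedGraph V)
    (hconn : G.Connected) (o : V) (u : V → ℝ) (hu : G.FiniteEnergy u) :
    (∀ N : ℕ, G.FiniteEnergy (fun x => min (max (-(N : ℝ)) (u x)) N)) ∧
      Filter.Tendsto (fun N : ℕ => G.ydistSq o (fun x => min (max (-(N : ℝ)) (u x)) N) u)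
        Filter.atTop (nhds 0) :=
  truncation_converges_general G o u hu
end

section
/- The generator of the regular Dirichlet form has domain D(L^{(D)}) = {u ∈ D(Q^{(D)}) : L̃u ∈ ℓ²(V,m)}, and on this domain L^{(D)} acts as the formal Laplacian L̃. -/
open scoped ENNReal NNReal BigOperators
open MeasureTheory Filter

/-!
For `u` of finite energy, summing by parts over the symmetric edge weights gives Green's formula
`Q̃(u, φ) = ⟨L̃u, φ⟩` for every finitely supported `φ`. Testing `Q(u, ·) = ⟨L u, ·⟩` against
delta functions, which lie in `D(Q^(D))`, then identifies `L u` with `L̃u` pointwise. Conversely,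
if `L̃u ∈ ℓ²(V,m)`, both sides of Green's formula are continuous in the form norm (Cauchy–Schwarz
in `ℓ²(b)`, `ℓ²(c)` and `ℓ²(m)`), so the formula holds for all `φ ∈ D(Q^(D))`, which puts `u` in
the domain of the generator.
-/

section WeightedL2

variable {ι : Type*} {w : ι → ℝ}

lemma MemL2.summable_mul (hw : ∀ i, 0 ≤ w i) {a b : ι → ℝ} (ha : MemL2 w a) (hb : MemL2 w b) :
    Summable fun i => a i * b i * w i := by
  refine ((ha.add hb).div_const 2).of_norm_bounded fun i => ?_
  rw [Real.norm_eq_abs, abs_mul, abs_of_nonneg (hw i), abs_mul]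
  nlinarith [hw i, sq_nonneg (|a i| - |b i|), sq_abs (a i), sq_abs (b i)]

lemma MemL2.sub (hw : ∀ i, 0 ≤ w i) {a b : ι → ℝ} (ha : MemL2 w a) (hb : MemL2 w b) :
    MemL2 w fun i => a i - b i := by
  refine ((ha.add hb).mul_left 2).of_nonneg_of_le (fun i => mul_nonneg (sq_nonneg _) (hw i))
    fun i => ?_
  nlinarith [hw i, mul_nonneg (sq_nonneg (a i + b i)) (hw i)]

lemma MemL2.of_finite_support {a : ι → ℝ} (ha : (Function.support a).Finite) : MemL2 w a :=
  summable_of_hasFiniteSupport <| ha.subset fun i hi h => hi (by simp [h])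

lemma l2inner_sq_le (hw : ∀ i, 0 ≤ w i) {a b : ι → ℝ} (ha : MemL2 w a) (hb : MemL2 w b) :
    l2inner w a b ^ 2 ≤ (∑' i, a i ^ 2 * w i) * ∑' i, b i ^ 2 * w i :=
  le_of_tendsto_of_tendsto' ((ha.summable_mul hw hb).hasSum.pow 2)
    (Tendsto.mul ha.hasSum hb.hasSum) fun s => Finset.sum_sq_le_sum_mul_sum_of_sq_le_mul s
      (r := fun i => a i * b i * w i) (f := fun i => a i ^ 2 * w i) (g := fun i => b i ^ 2 * w i)
      (fun i _ => mul_nonneg (sq_nonneg _) (hw i)) (fun i _ => mul_nonneg (sq_nonneg _) (hw i))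
      fun i _ => le_of_eq (by ring)

lemma tendsto_l2inner (hw : ∀ i, 0 ≤ w i) {a b : ι → ℝ} {c : ℕ → ι → ℝ} (ha : MemL2 w a)
    (hb : MemL2 w b) (hc : ∀ n, MemL2 w (c n))
    (hbc : Tendsto (fun n => ∑' i, (b i - c n i) ^ 2 * w i) atTop (nhds 0)) :
    Tendsto (fun n => l2inner w a (c n)) atTop (nhds (l2inner w a b)) := by
  have hdiff : ∀ n, MemL2 w fun i => b i - c n i := fun n => hb.sub hw (hc n)
  have hsplit : ∀ n, l2inner w a (c n) = l2inner w a b - l2inner w a fun i => b i - c n i := by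
    intro n
    rw [l2inner, l2inner, l2inner,
      ← (ha.summable_mul hw hb).tsum_sub (ha.summable_mul hw (hdiff n))]
    exact tsum_congr fun i => by ring
  have hsmall : Tendsto (fun n => l2inner w a fun i => b i - c n i) atTop (nhds 0) := by
    have hbound : Tendsto (fun n => √((∑' i, a i ^ 2 * w i) * ∑' i, (b i - c n i) ^ 2 * w i))
        atTop (nhds 0) := by
      simpa using ((hbc.const_mul _).sqrt)
    refine squeeze_zero_norm (fun n => ?_) hbound
    exact Real.abs_le_sqrt (l2inner_sq_le hw ha (hdiff n))
  simpa [hsplit] using (tendsto_const_nhds (x := l2inner w a b)).sub hsmall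

lemma l2inner_single [DecidableEq ι] (a : ι → ℝ) (i : ι) :
    l2inner w a (Pi.single i 1) = a i * w i := by
  rw [l2inner, tsum_eq_single i fun j hj => by simp [hj]]
  simp

end WeightedL2

lemma summable_iff_tsum_ofReal_lt_top {α : Type*} {f : α → ℝ} (hf : ∀ i, 0 ≤ f i) :
    Summable f ↔ ∑' i, ENNReal.ofReal (f i) < ⊤ :=
  ⟨Summable.tsum_ofReal_lt_top, fun h =>
    (ENNReal.summable_toReal h.ne).congr fun i => ENNReal.toReal_ofReal (hf i)⟩

namespace WeightedGraph

variable {V : Type*} {G : WeightedGraph V} {m : V → ℝ}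

lemma finiteEnergy_iff {u : V → ℝ} :
    G.FiniteEnergy u ↔ MemL2 (fun p : V × V => G.b p.1 p.2) (fun p => u p.1 - u p.2) ∧
      MemL2 G.c u := by
  rw [MemL2, MemL2,
    summable_iff_tsum_ofReal_lt_top fun p => mul_nonneg (sq_nonneg _) (G.b_nonneg _ _),
    summable_iff_tsum_ofReal_lt_top fun x => mul_nonneg (sq_nonneg _) (G.c_nonneg _)]
  simp only [FiniteEnergy, energy, ENNReal.add_lt_top, mul_comm (_ ^ 2)]
  simp [lt_top_iff_ne_top, ENNReal.mul_eq_top]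

lemma energy_toReal {u : V → ℝ} (hu : G.FiniteEnergy u) :
    (G.energy u).toReal = 1 / 2 * ∑' p : V × V, (u p.1 - u p.2) ^ 2 * G.b p.1 p.2
      + ∑' x, u x ^ 2 * G.c x := by
  obtain ⟨hedge, hvert⟩ := ENNReal.add_lt_top.mp hu
  rw [energy, ENNReal.toReal_add hedge.ne hvert.ne, ENNReal.toReal_mul,
    ENNReal.tsum_toReal_eq fun _ => ENNReal.ofReal_ne_top,
    ENNReal.tsum_toReal_eq fun _ => ENNReal.ofReal_ne_top]
  have hedge_term (p : V × V) : (ENNReal.ofReal (G.b p.1 p.2 * (u p.1 - u p.2) ^ 2)).toReal =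
      (u p.1 - u p.2) ^ 2 * G.b p.1 p.2 := by
    rw [ENNReal.toReal_ofReal (mul_nonneg (G.b_nonneg _ _) (sq_nonneg _)), mul_comm]
  have hvert_term (x : V) : (ENNReal.ofReal (G.c x * u x ^ 2)).toReal = u x ^ 2 * G.c x := by
    rw [ENNReal.toReal_ofReal (mul_nonneg (G.c_nonneg _) (sq_nonneg _)), mul_comm]
  simp [tsum_congr hedge_term, tsum_congr hvert_term]

lemma energyBilin_eq_l2inner (u v : V → ℝ) :
    G.energyBilin u v = 1 / 2 * l2inner (fun p : V × V => G.b p.1 p.2)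
      (fun p => u p.1 - u p.2) (fun p => v p.1 - v p.2) + l2inner G.c u v := by
  simp only [energyBilin, l2inner, mul_comm (G.b _ _), mul_comm (G.c _), mul_assoc]

lemma finiteEnergy_sub_s9 {u v : V → ℝ} (hu : G.FiniteEnergy u) (hv : G.FiniteEnergy v) :
    G.FiniteEnergy fun x => u x - v x := by
  obtain ⟨hu_edge, hu_vert⟩ := finiteEnergy_iff.mp hu
  obtain ⟨hv_edge, hv_vert⟩ := finiteEnergy_iff.mp hv
  refine finiteEnergy_iff.mpr ⟨?_, hu_vert.sub G.c_nonneg hv_vert⟩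
  exact (hu_edge.sub (fun p : V × V => G.b_nonneg p.1 p.2) hv_edge).congr fun p => by ring

lemma memL2_comp_fst {φ : V → ℝ} (hφ : (Function.support φ).Finite) :
    MemL2 (fun p : V × V => G.b p.1 p.2) fun p => φ p.1 :=
  (summable_prod_of_nonneg fun p => mul_nonneg (sq_nonneg _) (G.b_nonneg _ _)).mpr
    ⟨fun x => (G.b_summable x).mul_left (φ x ^ 2),
      summable_of_hasFiniteSupport <| hφ.subset fun x hx h => hx (by simp [h])⟩

lemma memL2_comp_snd {φ : V → ℝ} (hφ : (Function.support φ).Finite) :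
    MemL2 (fun p : V × V => G.b p.1 p.2) fun p => φ p.2 :=
  (Equiv.prodComm V V).summable_iff.mp <| (memL2_comp_fst (G := G) hφ).congr fun p => by
    simp [G.b_symm p.1 p.2]

lemma finiteEnergy_of_finite_support {φ : V → ℝ} (hφ : (Function.support φ).Finite) :
    G.FiniteEnergy φ :=
  finiteEnergy_iff.mpr
    ⟨(memL2_comp_fst hφ).sub (fun p : V × V => G.b_nonneg p.1 p.2) (memL2_comp_snd hφ),
      MemL2.of_finite_support hφ⟩

lemma mem_regDom_of_finite_support {φ : V → ℝ} (hφ : (Function.support φ).Finite) :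
    φ ∈ G.regDom m :=
  ⟨finiteEnergy_of_finite_support hφ, MemL2.of_finite_support hφ, fun _ => φ, fun _ => hφ,
    by simp [energy]⟩

/-- Summing by parts over the edges: the symmetry of `b` pairs the edge `(x, y)` with `(y, x)`. -/
lemma tsum_edge_mul_sub {u φ : V → ℝ} (hu : G.FiniteEnergy u)
    (hφ : (Function.support φ).Finite) :
    ∑' p : V × V, G.b p.1 p.2 * (u p.1 - u p.2) * (φ p.1 - φ p.2) =
      2 * ∑' x, φ x * ∑' y, G.b x y * (u x - u y) := by
  set F : V × V → ℝ := fun p => G.b p.1 p.2 * (u p.1 - u p.2) * φ p.1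
  have hF : Summable F := ((finiteEnergy_iff.mp hu).1.summable_mul
    (fun p : V × V => G.b_nonneg p.1 p.2) (memL2_comp_fst hφ)).congr fun p => by ring
  have hpair (p : V × V) :
      G.b p.1 p.2 * (u p.1 - u p.2) * (φ p.1 - φ p.2) = F p + F (Equiv.prodComm V V p) := by
    simp only [F, Equiv.prodComm_apply, Prod.fst_swap, Prod.snd_swap, G.b_symm p.2 p.1]
    ring
  have hF_swap : Summable fun p => F (Equiv.prodComm V V p) :=
    (Equiv.prodComm V V).summable_iff.mpr hF
  rw [tsum_congr hpair, hF.tsum_add hF_swap,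
    (Equiv.prodComm V V).tsum_eq F, ← two_mul, hF.tsum_prod]
  congr 2 with x
  rw [← tsum_mul_left]
  exact tsum_congr fun y => by ring

lemma formalL_mul (hm : ∀ x, 0 < m x) (u : V → ℝ) (x : V) :
    G.formalL m u x * m x = (∑' y, G.b x y * (u x - u y)) + G.c x * u x :=
  div_mul_cancel₀ _ (hm x).ne'

lemma energyBilin_eq_l2inner_formalL_of_finite_support (hm : ∀ x, 0 < m x) {u φ : V → ℝ}
    (hu : G.FiniteEnergy u) (hφ : (Function.support φ).Finite) :
    G.energyBilin u φ = l2inner m (G.formalL m u) φ := by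
  have hsum {f : V → ℝ} : Summable fun x => φ x * f x :=
    summable_of_hasFiniteSupport <| hφ.subset (Function.support_mul_subset_left _ _)
  have hvert : ∑' x, G.c x * u x * φ x = ∑' x, φ x * (G.c x * u x) :=
    tsum_congr fun x => mul_comm _ _
  rw [energyBilin, tsum_edge_mul_sub hu hφ, ← mul_assoc, one_div_mul_cancel two_ne_zero, one_mul,
    hvert, ← hsum.tsum_add hsum, l2inner]
  exact tsum_congr fun x => by rw [mul_right_comm, formalL_mul hm]; ring

lemma tendsto_energyBilin {u v : V → ℝ} {f : ℕ → V → ℝ} (hu : G.FiniteEnergy u)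
    (hv : G.FiniteEnergy v) (hf : ∀ n, G.FiniteEnergy (f n))
    (hlim : Tendsto (fun n => (G.energy fun x => v x - f n x).toReal) atTop (nhds 0)) :
    Tendsto (fun n => G.energyBilin u (f n)) atTop (nhds (G.energyBilin u v)) := by
  set edge := fun n => ∑' p : V × V, ((v p.1 - f n p.1) - (v p.2 - f n p.2)) ^ 2 * G.b p.1 p.2
  set vert := fun n => ∑' x, (v x - f n x) ^ 2 * G.c x
  have hedge_nonneg (n : ℕ) : 0 ≤ edge n :=
    tsum_nonneg fun p => mul_nonneg (sq_nonneg _) (G.b_nonneg _ _)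
  have hvert_nonneg (n : ℕ) : 0 ≤ vert n :=
    tsum_nonneg fun x => mul_nonneg (sq_nonneg _) (G.c_nonneg _)
  have hsum : Tendsto (fun n => 1 / 2 * edge n + vert n) atTop (nhds 0) := by
    simpa only [energy_toReal (finiteEnergy_sub_s9 hv (hf _))] using hlim
  have hedge : Tendsto edge atTop (nhds 0) :=
    squeeze_zero (g := fun n => 2 * (1 / 2 * edge n + vert n)) hedge_nonneg
      (fun n => by linarith [hvert_nonneg n]) (by simpa using hsum.const_mul 2)
  have hvert : Tendsto vert atTop (nhds 0) :=
    squeeze_zero hvert_nonneg (fun n => by linarith [hedge_nonneg n]) hsum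
  obtain ⟨hu_edge, hu_vert⟩ := finiteEnergy_iff.mp hu
  obtain ⟨hv_edge, hv_vert⟩ := finiteEnergy_iff.mp hv
  simp only [energyBilin_eq_l2inner]
  refine ((tendsto_l2inner (fun p : V × V => G.b_nonneg p.1 p.2) hu_edge hv_edge
    (fun n => (finiteEnergy_iff.mp (hf n)).1) ?_).const_mul _).add
    (tendsto_l2inner G.c_nonneg hu_vert hv_vert (fun n => (finiteEnergy_iff.mp (hf n)).2) hvert)
  exact hedge.congr fun n => tsum_congr fun p => by ring

theorem energyBilin_eq_l2inner_formalL (hm : ∀ x, 0 < m x) {u v : V → ℝ}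
    (hu : G.FiniteEnergy u) (hLu : MemL2 m (G.formalL m u)) (hv : v ∈ G.regDom m) :
    G.energyBilin u v = l2inner m (G.formalL m u) v := by
  obtain ⟨hvE, hvL2, f, hf, hlim⟩ := hv
  set energyDist := fun n => (G.energy fun x => v x - f n x).toReal
  set massDist := fun n => ∑' x, (v x - f n x) ^ 2 * m x
  have henergy_nonneg (n : ℕ) : 0 ≤ energyDist n := ENNReal.toReal_nonneg
  have hmass_nonneg (n : ℕ) : 0 ≤ massDist n :=
    tsum_nonneg fun x => mul_nonneg (sq_nonneg _) (hm x).le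
  have hQ : Tendsto (fun n => G.energyBilin u (f n)) atTop (nhds (G.energyBilin u v)) :=
    tendsto_energyBilin hu hvE (fun n => finiteEnergy_of_finite_support (hf n)) <|
      squeeze_zero henergy_nonneg (fun n => by linarith [hmass_nonneg n]) hlim
  have hL : Tendsto (fun n => l2inner m (G.formalL m u) (f n)) atTop
      (nhds (l2inner m (G.formalL m u) v)) :=
    tendsto_l2inner (fun x => (hm x).le) hLu hvL2 (fun n => MemL2.of_finite_support (hf n)) <|
      squeeze_zero hmass_nonneg (fun n => by linarith [henergy_nonneg n]) hlim
  exact tendsto_nhds_unique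
    (hQ.congr fun n => energyBilin_eq_l2inner_formalL_of_finite_support hm hu (hf n)) hL

end WeightedGraph

theorem regular_generator_domain_general {V : Type*} (G : WeightedGraph V)
    (m : V → ℝ) (hm : ∀ x, 0 < m x) (A : (V → ℝ) → V → ℝ) (domA : Set (V → ℝ))
    -- (A, domA) is the nonnegative self-adjoint operator associated with Q^(D):
    (h1 : domA ⊆ G.regDom m)
    (h2 : ∀ u ∈ domA, MemL2 m (A u))
    (h3 : ∀ u ∈ domA, ∀ v ∈ G.regDom m, G.energyBilin u v = l2inner m (A u) v)
    (h4 : ∀ u ∈ G.regDom m, ∀ w : V → ℝ, MemL2 m w →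
      (∀ v ∈ G.regDom m, G.energyBilin u v = l2inner m w v) → u ∈ domA) :
    domA = {u | u ∈ G.regDom m ∧ MemL2 m (G.formalL m u)} ∧
      ∀ u ∈ domA, ∀ x, A u x = G.formalL m u x := by
  classical
  have hA (u : V → ℝ) (hu : u ∈ domA) : A u = G.formalL m u := by
    ext x
    have hδ : (Function.support (Pi.single x 1 : V → ℝ)).Finite :=
      (Set.finite_singleton x).subset Pi.support_single_subset
    have key := (h3 u hu _ (WeightedGraph.mem_regDom_of_finite_support hδ)).symm.trans
      (WeightedGraph.energyBilin_eq_l2inner_formalL_of_finite_support hm (h1 hu).1 hδ)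
    rw [l2inner_single, l2inner_single] at key
    exact mul_right_cancel₀ (hm x).ne' key
  refine ⟨Set.ext fun u => ⟨fun hu => ⟨h1 hu, hA u hu ▸ h2 u hu⟩, fun ⟨hu, hLu⟩ => ?_⟩,
    fun u hu x => by rw [hA u hu]⟩
  exact h4 u hu _ hLu fun v hv => WeightedGraph.energyBilin_eq_l2inner_formalL hm hu.1 hLu hv

/-- the generator `L^(D)` of the regular Dirichlet form has domain
`{u ∈ D(Q^(D)) : L̃u ∈ ℓ²(V,m)}` and acts there as the formal Laplacian `L̃`. -/
theorem regular_generator_domain {V : Type*} [Countable V] (G : WeightedGraph V)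
    (m : V → ℝ) (hm : ∀ x, 0 < m x) (A : (V → ℝ) → V → ℝ) (domA : Set (V → ℝ))
    -- (A, domA) is the nonnegative self-adjoint operator associated with Q^(D):
    (h1 : domA ⊆ G.regDom m)
    (h2 : ∀ u ∈ domA, MemL2 m (A u))
    (h3 : ∀ u ∈ domA, ∀ v ∈ G.regDom m, G.energyBilin u v = l2inner m (A u) v)
    (h4 : ∀ u ∈ G.regDom m, ∀ w : V → ℝ, MemL2 m w →
      (∀ v ∈ G.regDom m, G.energyBilin u v = l2inner m w v) → u ∈ domA) :
    domA = {u | u ∈ G.regDom m ∧ MemL2 m (G.formalL m u)} ∧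
      ∀ u ∈ domA, ∀ x, A u x = G.formalL m u x :=
  regular_generator_domain_general G m hm A domA h1 h2 h3 h4
end

section
/- Dichotomy of recurrence and transience: if (b,c) is connected and Q a Dirichlet form associated with (b,c) with semigroup e^{-tL}, then either G(x,y) := ∫₀^∞ (e^{-tL}δ_x)(y) dt < ∞ for all x,y ∈ V, or G(x,y) = ∞ for all x,y ∈ V. Consequently the semigroup is either transient or recurrent. -/
open scoped ENNReal NNReal BigOperators
open MeasureTheory Filter

section Helpers
open scoped Classical

variable {V : Type*} {G : WeightedGraph V} {m : V → ℝ}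

private lemma delta_memL2 (hm : ∀ x, 0 < m x) (x : V) :
    MemL2 m (fun z => if z = x then (1:ℝ) else 0) := by
  have h : (fun z => (if z = x then (1:ℝ) else 0) ^ 2 * m z)
      = fun z => if z = x then m x else 0 := by
    funext z; by_cases hz : z = x <;> simp [hz]
  unfold MemL2
  rw [h]
  exact ⟨m x, hasSum_ite_eq x (m x)⟩

private lemma delta_ne_zero (x : V) :
    (fun z => if z = x then (1:ℝ) else 0) ≠ 0 := by
  intro h
  have := congrFun h x
  simp at this

private lemma delta_nonneg (x : V) :
    ∀ z, 0 ≤ (fun z => if z = x then (1:ℝ) else 0) z := by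
  intro z; by_cases hz : z = x <;> simp [hz]

/-- Transfer in the first variable: if the Green function is infinite at `(x', y)` then it
is infinite at `(x, y)`, using the positivity improving semigroup. -/
private lemma green_transfer (hm : ∀ x, 0 < m x) (S : FormSetup G m)
    (hpi : ∀ t : ℝ, 0 < t → ∀ f : V → ℝ, MemL2 m f → (∀ x, 0 ≤ f x) → f ≠ 0 →
      ∀ y, 0 < S.T t f y)
    (x x' y : V) (h : S.green x' y = ⊤) : S.green x y = ⊤ := by
  classical
  set δx : V → ℝ := fun z => if z = x then 1 else 0 with hδx
  set δx' : V → ℝ := fun z => if z = x' then 1 else 0 with hδx'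
  have hδxL2 : MemL2 m δx := delta_memL2 hm x
  have hδx'L2 : MemL2 m δx' := delta_memL2 hm x'
  set ε : ℝ := S.T 1 δx x' with hε
  have hεpos : 0 < ε := hpi 1 one_pos δx hδxL2 (delta_nonneg x) (delta_ne_zero x) x'
  -- pointwise comparison: ε * T t δx' z ≤ T (t+1) δx z for t > 0
  have hcomp : ∀ t : ℝ, 0 < t → ∀ z, ε * S.T t δx' z ≤ S.T (t + 1) δx z := by
    intro t ht z
    have hsg : S.T (t + 1) δx = S.T t (S.T 1 δx) := S.T_semigroup t 1 ht one_pos δx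
    have hg : ∀ w, 0 ≤ S.T 1 δx w - ε * δx' w := by
      intro w
      by_cases hw : w = x'
      · simp [hδx', hw, hε]
      · have := S.T_pos 1 one_pos δx (delta_nonneg x) w
        simp only [hδx', hw, if_neg hw]
        linarith
    have hTg := S.T_pos t ht _ hg z
    have hlin := S.T_linear t
    have hsub : S.T t (fun w => S.T 1 δx w - ε * δx' w)
        = fun w => S.T t (S.T 1 δx) w - ε * S.T t δx' w := by
      have h1 : (fun w => S.T 1 δx w - ε * δx' w) = S.T 1 δx - ε • δx' := by
        funext w; simp [Pi.smul_apply, smul_eq_mul]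
      rw [h1, hlin.map_sub, hlin.map_smul]
      funext w; simp [Pi.smul_apply, smul_eq_mul]
    rw [hsub] at hTg
    simp only at hTg
    rw [hsg]
    linarith
  -- now integrate
  have hstep1 : (∫⁻ t in Set.Ioi (1:ℝ), ENNReal.ofReal (S.T t δx y)) ≤ S.green x y := by
    unfold FormSetup.green
    exact MeasureTheory.lintegral_mono_set (Set.Ioi_subset_Ioi (by norm_num))
  have hcov : (∫⁻ t in Set.Ioi (1:ℝ), ENNReal.ofReal (S.T t δx y))
      = ∫⁻ t in Set.Ioi (0:ℝ), ENNReal.ofReal (S.T (t + 1) δx y) := by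
    have hmp : MeasureTheory.MeasurePreserving (fun t : ℝ => t + 1)
        MeasureTheory.volume MeasureTheory.volume :=
      MeasureTheory.measurePreserving_add_right MeasureTheory.volume 1
    have hemb : MeasurableEmbedding (fun t : ℝ => t + 1) :=
      (Homeomorph.addRight (1:ℝ)).isClosedEmbedding.measurableEmbedding
    have := hmp.setLIntegral_comp_preimage_emb hemb
      (fun t => ENNReal.ofReal (S.T t δx y)) (Set.Ioi (1:ℝ))
    rw [← this]
    congr 1
    rw [Set.preimage_add_const_Ioi]
    norm_num
  have hstep2 : (∫⁻ t in Set.Ioi (0:ℝ), ENNReal.ofReal (ε * S.T t δx' y))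
      ≤ ∫⁻ t in Set.Ioi (0:ℝ), ENNReal.ofReal (S.T (t + 1) δx y) := by
    apply MeasureTheory.lintegral_mono_ae
    filter_upwards [MeasureTheory.ae_restrict_mem measurableSet_Ioi] with t ht
    exact ENNReal.ofReal_le_ofReal (hcomp t ht y)
  have hmul : (∫⁻ t in Set.Ioi (0:ℝ), ENNReal.ofReal (ε * S.T t δx' y))
      = ENNReal.ofReal ε * S.green x' y := by
    unfold FormSetup.green
    rw [← MeasureTheory.lintegral_const_mul' (ENNReal.ofReal ε) _ ENNReal.ofReal_ne_top]
    apply MeasureTheory.lintegral_congr_ae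
    filter_upwards [MeasureTheory.ae_restrict_mem measurableSet_Ioi] with t ht
    exact ENNReal.ofReal_mul hεpos.le
  have hfin : ENNReal.ofReal ε * S.green x' y = ⊤ := by
    rw [h, ENNReal.mul_top]
    simp [ENNReal.ofReal_eq_zero, not_le.mpr hεpos]
  have : (⊤ : ℝ≥0∞) ≤ S.green x y := by
    calc (⊤ : ℝ≥0∞) = ENNReal.ofReal ε * S.green x' y := hfin.symm
    _ = ∫⁻ t in Set.Ioi (0:ℝ), ENNReal.ofReal (ε * S.T t δx' y) := hmul.symm
    _ ≤ ∫⁻ t in Set.Ioi (0:ℝ), ENNReal.ofReal (S.T (t + 1) δx y) := hstep2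
    _ = ∫⁻ t in Set.Ioi (1:ℝ), ENNReal.ofReal (S.T t δx y) := hcov.symm
    _ ≤ S.green x y := hstep1
  exact top_le_iff.mp this

/-- Symmetry: `G(x,y) m(y) = G(y,x) m(x)`, so infinity transfers. -/
private lemma green_symm_top (hm : ∀ x, 0 < m x) (S : FormSetup G m)
    (x y : V) (h : S.green x y = ⊤) : S.green y x = ⊤ := by
  classical
  set δx : V → ℝ := fun z => if z = x then 1 else 0 with hδx
  set δy : V → ℝ := fun z => if z = y then 1 else 0 with hδy
  have hδxL2 : MemL2 m δx := delta_memL2 hm x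
  have hδyL2 : MemL2 m δy := delta_memL2 hm y
  have hpt : ∀ t : ℝ, 0 < t → S.T t δx y * m y = S.T t δy x * m x := by
    intro t ht
    have hs := S.T_symm t ht δx δy hδxL2 hδyL2
    have h1 : l2inner m (S.T t δx) δy = S.T t δx y * m y := by
      unfold l2inner
      rw [tsum_eq_single y]
      · simp [hδy]
      · intro z hz; simp [hδy, hz]
    have h2 : l2inner m δx (S.T t δy) = S.T t δy x * m x := by
      unfold l2inner
      rw [tsum_eq_single x]
      · simp [hδx]
      · intro z hz; simp [hδx, hz]
    rw [h1, h2] at hs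
    exact hs
  have key : S.green x y * ENNReal.ofReal (m y) = S.green y x * ENNReal.ofReal (m x) := by
    unfold FormSetup.green
    rw [← MeasureTheory.lintegral_mul_const' (ENNReal.ofReal (m y)) _ ENNReal.ofReal_ne_top,
      ← MeasureTheory.lintegral_mul_const' (ENNReal.ofReal (m x)) _ ENNReal.ofReal_ne_top]
    apply MeasureTheory.lintegral_congr_ae
    filter_upwards [MeasureTheory.ae_restrict_mem measurableSet_Ioi] with t ht
    have h1 := S.T_pos t ht δx (delta_nonneg x) y
    have h2 := S.T_pos t ht δy (delta_nonneg y) x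
    rw [← ENNReal.ofReal_mul h1, ← ENNReal.ofReal_mul h2, hpt t ht]
  have hL : S.green x y * ENNReal.ofReal (m y) = ⊤ := by
    rw [h, ENNReal.top_mul]
    simp [ENNReal.ofReal_eq_zero, not_le.mpr (hm y)]
  rw [hL] at key
  by_contra hne
  have h1 : S.green y x ≠ ⊤ := hne
  exact (ENNReal.mul_ne_top h1 ENNReal.ofReal_ne_top) key.symm

end Helpers

/-- dichotomy of recurrence and transience for a connected graph: the Green
function is either finite everywhere or infinite everywhere. -/
theorem green_dichotomy {V : Type*} [Countable V] (G : WeightedGraph V) (m : V → ℝ)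
    (hm : ∀ x, 0 < m x) (hconn : G.Connected) (S : FormSetup G m)
    -- by connectedness the semigroup is positivity improving:
    (hpi : ∀ t : ℝ, 0 < t → ∀ f : V → ℝ, MemL2 m f → (∀ x, 0 ≤ f x) → f ≠ 0 →
      ∀ y, 0 < S.T t f y) :
    (∀ x y, S.green x y < ⊤) ∨ (∀ x y, S.green x y = ⊤) := by
  by_cases h : ∀ x y, S.green x y < ⊤
  · exact Or.inl h
  · right
    push_neg at h
    obtain ⟨x₀, y₀, h0⟩ := h
    have h0 : S.green x₀ y₀ = ⊤ := top_le_iff.mp h0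
    intro x y
    have h1 : S.green y y₀ = ⊤ := green_transfer hm S hpi y x₀ y₀ h0
    have h2 : S.green y₀ y = ⊤ := green_symm_top hm S y y₀ h1
    exact green_transfer hm S hpi x y₀ y h2
end
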